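/- arXiv:2312.10910 — 3 statements merged into one kernel-verified Lean document; each statement's English description precedes it below -/
import Mathlib

section
/- Let h ≥ 1 and let A = {a_0 < a_1 < ... < a_k} be a finite B_h-set of integers with k ≥ 1. Then a_k ≥ a_0 + (1/h)·(binom(k+h, k) − 1); equivalently, h·(a_k − a_0) ≥ binom(k+h, k) − 1. -/
/-!
The sum map `Sym (Fin (k + 1)) h → ℤ`, sending a multiset `{i₁, …, i_h}` of indices to
`a i₁ + ⋯ + a i_h`, is injective precisely because `range a` is a `B_h`-set. Its values lie in
`[h a₀, h a_k]`, so the `(k + h).choose k` multisets of size `h` from `k + 1` indices fit into an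
interval of `h (a_k - a₀) + 1` integers.
-/

/-- A set `A` of integers is a `B_h`-set if every solution to
`a_1 + ... + a_h = b_1 + ... + b_h` with all `a_i, b_i ∈ A` has
`{a_1, ..., a_h} = {b_1, ..., b_h}` as multisets. -/
def IsBhSet (h : ℕ) (A : Set ℤ) : Prop :=
  ∀ a b : Fin h → ℤ, (∀ i, a i ∈ A) → (∀ i, b i ∈ A) →
    (∑ i, a i) = (∑ i, b i) →
    Multiset.map a Finset.univ.val = Multiset.map b Finset.univ.val

open Function

theorem Multiset.exists_fin_map_eq {α : Type*} {n : ℕ} {s : Multiset α}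
    (hs : Multiset.card s = n) : ∃ g : Fin n → α, Finset.univ.val.map g = s := by
  obtain ⟨l, rfl⟩ : ∃ l : List α, (l : Multiset α) = s := ⟨s.toList, s.coe_toList⟩
  rw [Multiset.coe_card] at hs
  subst hs
  exact ⟨l.get, by rw [Fin.univ_val_map, List.ofFn_get]⟩

theorem IsBhSet.eq_of_sum_eq {h : ℕ} {A : Set ℤ} (hA : IsBhSet h A) {s t : Multiset ℤ}
    (hs : Multiset.card s = h) (ht : Multiset.card t = h) (hsA : ∀ x ∈ s, x ∈ A)
    (htA : ∀ x ∈ t, x ∈ A) (hst : s.sum = t.sum) : s = t := by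
  obtain ⟨f, rfl⟩ := Multiset.exists_fin_map_eq hs
  obtain ⟨g, rfl⟩ := Multiset.exists_fin_map_eq ht
  exact hA f g (fun i => hsA _ (Multiset.mem_map_of_mem _ (Finset.mem_univ_val i)))
    (fun i => htA _ (Multiset.mem_map_of_mem _ (Finset.mem_univ_val i))) hst

theorem IsBhSet.injective_sum_sym {h : ℕ} {A : Set ℤ} (hA : IsBhSet h A) {ι : Type*}
    {a : ι → ℤ} (ha : Injective a) (haA : ∀ i, a i ∈ A) :
    Injective fun s : Sym ι h => ((s : Multiset ι).map a).sum := fun s t hst =>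
  Sym.coe_injective <| Multiset.map_injective ha <|
    hA.eq_of_sum_eq (by simp) (by simp) (by simp [haA]) (by simp [haA]) hst

theorem Sym.nsmul_le_sum_map {ι M : Type*} [AddCommMonoid M] [Preorder M]
    [AddLeftMono M] {n : ℕ} {a : ι → M} {m : M} (hm : ∀ i, m ≤ a i) (s : Sym ι n) :
    n • m ≤ ((s : Multiset ι).map a).sum := by
  simpa using Multiset.card_nsmul_le_sum (s := (s : Multiset ι).map a)
    (Multiset.forall_mem_map_iff.2 fun i _ => hm i)

theorem Sym.sum_map_le_nsmul {ι M : Type*} [AddCommMonoid M] [Preorder M]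
    [AddLeftMono M] {n : ℕ} {a : ι → M} {m : M} (hm : ∀ i, a i ≤ m) (s : Sym ι n) :
    ((s : Multiset ι).map a).sum ≤ n • m := by
  simpa using Multiset.sum_le_card_nsmul ((s : Multiset ι).map a) m
    (Multiset.forall_mem_map_iff.2 fun i _ => hm i)

theorem Int.card_le_of_injective_of_mem_Icc {α : Type*} [Fintype α] [Nonempty α]
    {f : α → ℤ} (hf : Injective f) {m M : ℤ} (hfm : ∀ x, f x ∈ Set.Icc m M) :
    (Fintype.card α : ℤ) ≤ M + 1 - m := by
  obtain ⟨x⟩ := ‹Nonempty α›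
  have hIcc := Int.card_fintype_Icc_of_le (a := m) (b := M) (by linarith [(hfm x).1, (hfm x).2])
  rw [← hIcc]
  exact_mod_cast Fintype.card_le_of_injective (Set.codRestrict f _ hfm)
    (hf.codRestrict hfm)

theorem Sym.card_fin_succ_eq_choose (k h : ℕ) :
    Fintype.card (Sym (Fin (k + 1)) h) = (k + h).choose k := by
  rw [Sym.card_sym_eq_choose, Fintype.card_fin, show k + 1 + h - 1 = k + h by omega,
    Nat.choose_symm_add]

theorem stmt_0_general (h k : ℕ)
    (a : Fin (k + 1) → ℤ) (ha : StrictMono a)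
    (hA : IsBhSet h (Set.range a)) :
    (h : ℤ) * (a (Fin.last k) - a 0) ≥ ((k + h).choose k : ℤ) - 1 := by
  have hinj := hA.injective_sum_sym ha.injective fun i => Set.mem_range_self i
  have hcard := Int.card_le_of_injective_of_mem_Icc hinj fun s =>
    ⟨Sym.nsmul_le_sum_map (fun i => ha.monotone (Fin.zero_le i)) s,
      Sym.sum_map_le_nsmul (fun i => ha.monotone (Fin.le_last i)) s⟩
  rw [Sym.card_fin_succ_eq_choose] at hcard
  simp only [nsmul_eq_mul] at hcard
  linarith

theorem stmt_0 (h k : ℕ) (hh : 1 ≤ h) (hk : 1 ≤ k)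
    (a : Fin (k + 1) → ℤ) (ha : StrictMono a)
    (hA : IsBhSet h (Set.range a)) :
    (h : ℤ) * (a (Fin.last k) - a 0) ≥ ((k + h).choose k : ℤ) - 1 :=
  stmt_0_general h k a ha hA
end

section
/- Let h ≥ 1 and let A = {a_0 < a_1 < ... < a_k} be a finite B_h-set of integers. Then the set of integers f > a_k for which A ∪ {f} is not a B_h-set has cardinality at most Σ_{r=1}^{h−1} Σ_{M=1}^{k} binom(k, M)·binom(k−M+h−r, h−r)·(binom(h, M) − binom(r, M)). -/
namespace Multiset

lemma exists_fin_map_eq_s1 {α : Type*} {n : ℕ} (X : Multiset α) (hX : card X = n) :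
    ∃ w : Fin n → α, Finset.univ.val.map w = X := by
  obtain ⟨l, rfl⟩ : ∃ l : List α, (l : Multiset α) = X := Quotient.exists_rep X
  rw [coe_card] at hX
  subst hX
  exact ⟨l.get, by rw [Fin.univ_val_map, List.ofFn_get]⟩

lemma filter_ne_add_replicate_count {α : Type*} [DecidableEq α] (U : Multiset α) (f : α) :
    U.filter (· ≠ f) + replicate (U.count f) f = U := by
  rw [← filter_eq', add_comm]
  exact filter_add_not (· = f) U

lemma exists_map_eq_of_forall_mem_range {ι α : Type*} [Nonempty ι] {a : ι → α}
    {X : Multiset α} (hX : ∀ x ∈ X, x ∈ Set.range a) : ∃ X₀ : Multiset ι, X₀.map a = X :=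
  ⟨X.map (Function.invFun a), by
    rw [map_map]
    exact (map_congr rfl fun x hx => Function.invFun_eq (hX x hx)).trans (map_id X)⟩

lemma sum_map_eq_sum_count {ι M : Type*} [Fintype ι] [DecidableEq ι] [AddCommMonoid M]
    (Y : Multiset ι) (a : ι → M) : (Y.map a).sum = ∑ i, Y.count i • a i := by
  rw [Finset.sum_multiset_map_count]
  refine Finset.sum_subset (Finset.subset_univ _) fun i _ hi => ?_
  rw [count_eq_zero.mpr (by simpa using hi), zero_nsmul]

end Multiset

section BhSets

open Multiset

lemma isBhSet_iff_multiset {h : ℕ} {A : Set ℤ} :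
    IsBhSet h A ↔ ∀ X Y : Multiset ℤ, (∀ x ∈ X, x ∈ A) → (∀ y ∈ Y, y ∈ A) →
      card X = h → card Y = h → X.sum = Y.sum → X = Y := by
  constructor
  · intro hA X Y hXA hYA hX hY hsum
    obtain ⟨u, rfl⟩ := X.exists_fin_map_eq_s1 hX
    obtain ⟨v, rfl⟩ := Y.exists_fin_map_eq_s1 hY
    rw [Finset.sum_map_val, Finset.sum_map_val] at hsum
    exact hA u v (fun i => hXA _ (mem_map_of_mem _ (Finset.mem_univ i)))
      (fun i => hYA _ (mem_map_of_mem _ (Finset.mem_univ i))) hsum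
  · intro hA u v hu hv hsum
    rw [← Finset.sum_map_val, ← Finset.sum_map_val] at hsum
    exact hA _ _ (by simpa using hu) (by simpa using hv) (by simp) (by simp) hsum

lemma IsBhSet.eq_of_sum_eq_s1 {h : ℕ} {A : Set ℤ} (hA : IsBhSet h A) {a₀ : ℤ} (ha₀ : a₀ ∈ A)
    {X Y : Multiset ℤ} (hXA : ∀ x ∈ X, x ∈ A) (hYA : ∀ y ∈ Y, y ∈ A)
    (hcard : card X = card Y) (hY : card Y ≤ h) (hsum : X.sum = Y.sum) : X = Y := by
  have hpadded : ∀ W : Multiset ℤ, (∀ x ∈ W, x ∈ A) →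
      ∀ x ∈ W + replicate (h - card Y) a₀, x ∈ A := fun W hW x hx => by
    rcases mem_add.mp hx with hx | hx
    · exact hW x hx
    · rwa [eq_of_mem_replicate hx]
  refine add_right_cancel (isBhSet_iff_multiset.mp hA _ _ (hpadded X hXA) (hpadded Y hYA)
    ?_ ?_ (by simp [hsum]))
  all_goals simp only [card_add, card_replicate]; omega

lemma exists_disjoint_of_sum_add_eq {A : Set ℤ} {f : ℤ} {P Q : Multiset ℤ} {c d : ℕ}
    (hPA : ∀ x ∈ P, x ∈ A) (hQA : ∀ x ∈ Q, x ∈ A) (hdc : d < c)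
    (hcard : card P + c = card Q + d) (hsum : P.sum + c * f = Q.sum + d * f) :
    ∃ (r : ℕ) (X Y : Multiset ℤ), 0 < r ∧ (∀ x ∈ X, x ∈ A) ∧ (∀ y ∈ Y, y ∈ A) ∧
      Disjoint X Y ∧ card X + r = card Y ∧ card Y ≤ card Q ∧ r * f + X.sum = Y.sum := by
  classical
  have hP := sub_add_inter P Q
  have hQ := sub_add_inter Q P
  rw [Multiset.inter_comm] at hQ
  refine ⟨c - d, P - Q, Q - P, by omega,
    fun x hx => hPA x (mem_of_le (Multiset.sub_le_self _ _) hx),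
    fun x hx => hQA x (mem_of_le (Multiset.sub_le_self _ _) hx),
    disjoint_left.mpr fun hx hx' => ?_, ?_, card_le_card (Multiset.sub_le_self _ _), ?_⟩
  · rw [mem_sub] at hx hx'
    omega
  · have hP' := congrArg card hP
    have hQ' := congrArg card hQ
    rw [card_add] at hP' hQ'
    omega
  · have hP' := congrArg sum hP
    have hQ' := congrArg sum hQ
    rw [sum_add] at hP' hQ'
    push_cast [hdc.le]
    linarith

lemma IsBhSet.exists_disjoint_of_not_isBhSet_union {h : ℕ} {A : Set ℤ} (hA : IsBhSet h A)
    {a₀ : ℤ} (ha₀ : a₀ ∈ A) {f : ℤ} (hbad : ¬ IsBhSet h (A ∪ {f})) :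
    ∃ (r : ℕ) (X Y : Multiset ℤ), 0 < r ∧ (∀ x ∈ X, x ∈ A) ∧ (∀ y ∈ Y, y ∈ A) ∧
      Disjoint X Y ∧ card X + r = card Y ∧ card Y ≤ h ∧ r * f + X.sum = Y.sum := by
  classical
  simp only [isBhSet_iff_multiset, not_forall] at hbad
  obtain ⟨U, V, hU, hV, hUh, hVh, hsum, hne⟩ := hbad
  have hrest : ∀ W : Multiset ℤ, (∀ x ∈ W, x ∈ A ∪ {f}) → ∀ x ∈ W.filter (· ≠ f), x ∈ A :=
    fun W hW x hx => by
      obtain ⟨hxW, hxf⟩ := mem_filter.mp hx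
      simpa [hxf] using hW x hxW
  have hUdec := U.filter_ne_add_replicate_count f
  have hVdec := V.filter_ne_add_replicate_count f
  have hcardU := congrArg card hUdec
  have hcardV := congrArg card hVdec
  have hsumU := congrArg sum hUdec
  have hsumV := congrArg sum hVdec
  rw [card_add, card_replicate] at hcardU hcardV
  rw [sum_add, sum_replicate, nsmul_eq_mul] at hsumU hsumV
  rcases lt_trichotomy (V.count f) (U.count f) with hlt | heq | hgt
  · obtain ⟨r, X, Y, hr, hXA, hYA, hXY, hcard, hY, hXY'⟩ := exists_disjoint_of_sum_add_eq (f := f)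
      (hrest U hU) (hrest V hV) hlt (by omega) (by linarith)
    exact ⟨r, X, Y, hr, hXA, hYA, hXY, hcard, by omega, hXY'⟩
  · refine absurd ?_ hne
    rw [← hUdec, ← hVdec, heq, hA.eq_of_sum_eq_s1 ha₀ (hrest U hU) (hrest V hV) (by omega) (by omega)
      (by rw [heq] at hsumV; linarith)]
  · obtain ⟨r, X, Y, hr, hXA, hYA, hXY, hcard, hY, hXY'⟩ := exists_disjoint_of_sum_add_eq (f := f)
      (hrest V hV) (hrest U hU) hgt (by omega) (by linarith)
    exact ⟨r, X, Y, hr, hXA, hYA, hXY, hcard, by omega, hXY'⟩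

end BhSets

open Finset

section PartialSums

variable {k : ℕ}

def partialSum (m : Fin k → ℕ) (j : Fin k) : ℕ := ∑ i ∈ Iic j, m i

def partialSums (m : Fin k → ℕ) : Finset ℕ := ({j | m j ≠ 0} : Finset (Fin k)).image (partialSum m)

lemma partialSum_lt_partialSum (m : Fin k → ℕ) {j j' : Fin k} (hjj' : j < j') (hm : m j' ≠ 0) :
    partialSum m j < partialSum m j' :=
  sum_lt_sum_of_subset (Iic_subset_Iic.mpr hjj'.le) (mem_Iic.mpr le_rfl) (by simpa using hjj')
    (Nat.pos_of_ne_zero hm) fun _ _ _ => Nat.zero_le _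

lemma eq_of_partialSum_eq {m m' : Fin k → ℕ}
    (h : ∀ j, m j = 0 ∧ m' j = 0 ∨ partialSum m j = partialSum m' j) : m = m' := by
  funext j
  induction j using WellFoundedLT.induction with
  | ind j ih =>
    have hsplit : ∀ m : Fin k → ℕ, partialSum m j = m j + ∑ i ∈ Iio j, m i := fun m => by
      rw [partialSum, ← Iio_insert, sum_insert (by simp)]
    have hlow : ∑ i ∈ Iio j, m i = ∑ i ∈ Iio j, m' i :=
      sum_congr rfl fun i hi => ih i (by simpa using hi)
    rcases h j with ⟨h0, h0'⟩ | hj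
    · rw [h0, h0']
    · rw [hsplit, hsplit, hlow] at hj
      omega

lemma eq_of_partialSums_eq {m m' : Fin k → ℕ} (hsupp : ∀ j, m j = 0 ↔ m' j = 0)
    (hP : partialSums m = partialSums m') : m = m' := by
  set S : Finset (Fin k) := {j | m j ≠ 0}
  have hS : ∀ j, j ∈ S ↔ m' j ≠ 0 := fun j => by simp [S, hsupp]
  have hmono : ∀ m : Fin k → ℕ, (∀ j, j ∈ S ↔ m j ≠ 0) → StrictMono fun j : S => partialSum m j :=
    fun m hm j j' hjj' => partialSum_lt_partialSum m hjj' ((hm j').mp j'.2)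
  have hrange : ∀ m : Fin k → ℕ, (∀ j, j ∈ S ↔ m j ≠ 0) →
      Set.range (fun j : S => partialSum m j) = partialSums m := fun m hm => by
    ext p
    simp [partialSums, S, hm]
  have heq := ((hmono m fun j => by simp [S]).range_inj (hmono m' hS)).mp
    (by rw [hrange m fun j => by simp [S], hrange m' hS, hP])
  refine eq_of_partialSum_eq fun j => ?_
  by_cases hj : j ∈ S
  · exact Or.inr (congrFun heq ⟨j, hj⟩)
  · have : m j = 0 := by simpa [S] using hj
    exact Or.inl ⟨this, (hsupp j).mp this⟩

lemma card_partialSums (m : Fin k → ℕ) : #(partialSums m) = #{j | m j ≠ 0} := by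
  refine card_image_of_injOn fun j hj j' hj' hjj' => ?_
  replace hj : m j ≠ 0 := by simpa using hj
  replace hj' : m j' ≠ 0 := by simpa using hj'
  rcases lt_trichotomy j j' with hlt | heq | hgt
  · exact absurd hjj' (partialSum_lt_partialSum m hlt hj').ne
  · exact heq
  · exact absurd hjj' (partialSum_lt_partialSum m hgt hj).ne'

lemma partialSums_subset_Icc (m : Fin k → ℕ) : partialSums m ⊆ Icc 1 (∑ j, m j) := by
  intro p hp
  obtain ⟨j, hj, rfl⟩ := mem_image.mp hp
  have hj : m j ≠ 0 := (mem_filter.mp hj).2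
  have hle : m j ≤ partialSum m j := single_le_sum (fun _ _ => Nat.zero_le _) (mem_Iic.mpr le_rfl)
  exact mem_Icc.mpr ⟨by omega, sum_le_sum_of_subset (subset_univ _)⟩

lemma sum_mem_partialSums {m : Fin k → ℕ} (hm : ∑ j, m j ≠ 0) : ∑ j, m j ∈ partialSums m := by
  have hne : ({j | m j ≠ 0} : Finset (Fin k)).Nonempty := by
    obtain ⟨j, -, hj⟩ := exists_ne_zero_of_sum_ne_zero hm
    exact ⟨j, by simpa using hj⟩
  refine mem_image.mpr ⟨_, max'_mem _ hne, sum_subset (subset_univ _) fun i _ hi => ?_⟩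
  by_contra hmi
  exact hi (mem_Iic.mpr (le_max' _ i (by simpa using hmi)))

end PartialSums

section MultisetsIn

variable {α : Type*} [DecidableEq α]

def multisetsIn (T : Finset α) (c : ℕ) : Finset (Multiset α) :=
  univ.image fun z : Sym T c => (z : Multiset T).map Subtype.val

lemma mem_multisetsIn {T : Finset α} {c : ℕ} {X : Multiset α} (hX : Multiset.card X = c)
    (hXT : ∀ x ∈ X, x ∈ T) : X ∈ multisetsIn T c := by
  refine mem_image.mpr ⟨⟨X.pmap Subtype.mk hXT, by simp [hX]⟩, mem_univ _, ?_⟩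
  simp [Multiset.map_pmap, Multiset.pmap_eq_map]

lemma card_multisetsIn (T : Finset α) (c : ℕ) : #(multisetsIn T c) = (#T + c - 1).choose c := by
  rw [multisetsIn, card_image_of_injective, card_univ, Sym.card_sym_eq_choose, Fintype.card_coe]
  intro z z' hz
  exact Sym.coe_injective (Multiset.map_injective Subtype.val_injective hz)

end MultisetsIn

lemma card_powersetCard_Icc_sdiff {h r M : ℕ} (hr : r ≤ h) :
    #(powersetCard M (Icc 1 h) \ powersetCard M (Icc 1 r)) = h.choose M - r.choose M := by
  rw [card_sdiff_of_subset (powersetCard_mono (Icc_subset_Icc_right hr)), card_powersetCard,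
    card_powersetCard, Nat.card_Icc, Nat.card_Icc, Nat.add_sub_cancel, Nat.add_sub_cancel]

def witnessCodes (h k : ℕ) :
    Finset ((_ : ℕ) × (_ : Finset (Fin k)) × Multiset (Fin (k + 1)) × Finset ℕ) :=
  (Icc 1 (h - 1)).sigma fun r => univ.powerset.sigma fun S =>
    multisetsIn (univ \ S.map (Fin.succEmb k)) (h - r) ×ˢ
      (powersetCard #S (Icc 1 h) \ powersetCard #S (Icc 1 r))

lemma card_witnessCodes (h k : ℕ) :
    #(witnessCodes h k) = ∑ r ∈ Icc 1 (h - 1), ∑ M ∈ Icc 1 k,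
      k.choose M * (k - M + h - r).choose (h - r) * (h.choose M - r.choose M) := by
  rw [witnessCodes, card_sigma]
  refine sum_congr rfl fun r hr => ?_
  have hrh : r < h := by simp at hr; omega
  rw [card_sigma]
  have hS : ∀ S ∈ (univ : Finset (Fin k)).powerset,
      #(multisetsIn (univ \ S.map (Fin.succEmb k)) (h - r) ×ˢ
        (powersetCard #S (Icc 1 h) \ powersetCard #S (Icc 1 r)))
      = (k - #S + h - r).choose (h - r) * (h.choose #S - r.choose #S) := fun S _ => by
    have hSk : #S ≤ k := by simpa using card_le_univ S
    rw [card_product, card_multisetsIn, card_powersetCard_Icc_sdiff hrh.le,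
      card_sdiff_of_subset (subset_univ _), card_map, card_univ, Fintype.card_fin]
    congr 2
    omega
  rw [sum_congr rfl hS, sum_powerset_apply_card
      (fun M => (k - M + h - r).choose (h - r) * (h.choose M - r.choose M)),
    card_univ, Fintype.card_fin, range_eq_Ico, sum_eq_sum_Ico_succ_bot k.succ_pos,
    zero_add, Nat.succ_eq_add_one, Ico_add_one_right_eq_Icc]
  simp [mul_assoc]

section Collisions

variable {k : ℕ}

structure IsCollision (a : Fin (k + 1) → ℤ) (h : ℕ) (f : ℤ) (r : ℕ)
    (X Y : Multiset (Fin (k + 1))) : Prop where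
  pos : 0 < r
  card_left : Multiset.card X + r = h
  card_right : Multiset.card Y = h
  eq_zero_of_mem_of_mem : ∀ i ∈ X, i ∈ Y → i = 0
  sum_eq : r * f + (X.map a).sum = (Y.map a).sum

def tailCount (Y : Multiset (Fin (k + 1))) (j : Fin k) : ℕ := Y.count j.succ

def collisionCode (r : ℕ) (X Y : Multiset (Fin (k + 1))) :
    (_ : ℕ) × (_ : Finset (Fin k)) × Multiset (Fin (k + 1)) × Finset ℕ :=
  ⟨r, ({j | tailCount Y j ≠ 0} : Finset (Fin k)), X, partialSums (tailCount Y)⟩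

lemma count_zero_add_sum_tailCount (Y : Multiset (Fin (k + 1))) :
    Y.count 0 + ∑ j, tailCount Y j = Multiset.card Y := by
  show Y.count 0 + ∑ j : Fin k, Y.count j.succ = _
  rw [← Fin.sum_univ_succ (f := fun i => Y.count i)]
  exact Multiset.sum_count_eq_card fun _ _ => mem_univ _

lemma eq_of_tailCount_eq {Y Y' : Multiset (Fin (k + 1))}
    (hcard : Multiset.card Y = Multiset.card Y') (htail : tailCount Y = tailCount Y') : Y = Y' := by
  ext i
  cases i using Fin.cases with
  | zero =>
    have := count_zero_add_sum_tailCount Y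
    have := count_zero_add_sum_tailCount Y'
    rw [htail] at *
    omega
  | succ j => exact congrFun htail j

lemma sum_map_le_of_monotone (a : Fin (k + 1) → ℤ) (ha : Monotone a) (Y : Multiset (Fin (k + 1))) :
    (Y.map a).sum ≤ Y.count 0 * a 0 + (∑ j, tailCount Y j : ℕ) * a (Fin.last k) := by
  rw [Multiset.sum_map_eq_sum_count, Fin.sum_univ_succ, Nat.cast_sum, sum_mul]
  simp only [nsmul_eq_mul, add_le_add_iff_left]
  exact sum_le_sum fun j _ => mul_le_mul_of_nonneg_left (ha (Fin.le_last _)) (Nat.cast_nonneg _)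

namespace IsCollision

variable {a : Fin (k + 1) → ℤ} {h : ℕ} {f : ℤ} {r : ℕ} {X Y : Multiset (Fin (k + 1))}

lemma lt_sum_tailCount (hw : IsCollision a h f r X Y) (ha : Monotone a) (hf : a (Fin.last k) < f) :
    r < ∑ j, tailCount Y j := by
  have hX : (Multiset.card X : ℤ) * a 0 ≤ (X.map a).sum := by
    simpa using Multiset.card_nsmul_le_sum (s := X.map a) (by simpa using fun i _ => ha i.zero_le)
  have hY := sum_map_le_of_monotone a ha Y
  have hcount := count_zero_add_sum_tailCount Y
  generalize ∑ j, tailCount Y j = t at hY hcount ⊢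
  by_contra! htr
  have hcardX : (Multiset.card X : ℤ) = h - r := by have := hw.card_left; omega
  have hcount0 : (Y.count 0 : ℤ) = h - t := by rw [hw.card_right] at hcount; omega
  have hrf : (r : ℤ) * a (Fin.last k) < r * f :=
    mul_lt_mul_of_pos_left hf (by exact_mod_cast hw.pos)
  have hmono : ((r : ℤ) - t) * a 0 ≤ ((r : ℤ) - t) * a (Fin.last k) :=
    mul_le_mul_of_nonneg_left (ha (Fin.zero_le _)) (sub_nonneg.mpr (by exact_mod_cast htr))
  rw [hcardX] at hX
  rw [hcount0] at hY
  linarith [hw.sum_eq]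

lemma collisionCode_mem (hw : IsCollision a h f r X Y) (ha : Monotone a)
    (hf : a (Fin.last k) < f) : collisionCode r X Y ∈ witnessCodes h k := by
  have hrt := hw.lt_sum_tailCount ha hf
  have hth : ∑ j, tailCount Y j ≤ h := by
    have := count_zero_add_sum_tailCount Y
    rw [hw.card_right] at this
    omega
  simp only [collisionCode, witnessCodes, mem_sigma, mem_Icc, mem_powerset, subset_univ, true_and,
    mem_product, mem_sdiff, mem_powersetCard, card_partialSums]
  refine ⟨by have := hw.pos; omega, mem_multisetsIn (by have := hw.card_left; omega) ?_,
    ⟨(partialSums_subset_Icc _).trans (Icc_subset_Icc_right hth), trivial⟩, fun ⟨hsub, _⟩ => ?_⟩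
  · intro i hiX
    simp only [mem_sdiff, mem_univ, mem_map, mem_filter, true_and, not_exists, not_and]
    rintro j hj rfl
    exact Fin.succ_ne_zero j
      (hw.eq_zero_of_mem_of_mem _ hiX (Multiset.count_ne_zero.mp hj))
  · have := mem_Icc.mp (hsub (sum_mem_partialSums (by omega)))
    omega

lemma eq_of_collisionCode_eq {f' : ℤ} {r' : ℕ} {X' Y' : Multiset (Fin (k + 1))}
    (hw : IsCollision a h f r X Y) (hw' : IsCollision a h f' r' X' Y')
    (hcode : collisionCode r X Y = collisionCode r' X' Y') : f = f' := by
  simp only [collisionCode, Sigma.mk.inj_iff, heq_eq_eq, Prod.mk.injEq] at hcode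
  obtain ⟨rfl, hS, rfl, hP⟩ := hcode
  have hsupp : ∀ j, tailCount Y j = 0 ↔ tailCount Y' j = 0 := fun j => by
    simpa using (Iff.of_eq (congrArg (j ∈ ·) hS)).not
  have hY : Y = Y' := eq_of_tailCount_eq (by rw [hw.card_right, hw'.card_right])
    (eq_of_partialSums_eq hsupp hP)
  subst hY
  have := hw.sum_eq.trans hw'.sum_eq.symm
  exact mul_left_cancel₀ (b := f) (a := (r : ℤ)) (by exact_mod_cast hw.pos.ne') (by linarith)

end IsCollision

lemma exists_isCollision {a : Fin (k + 1) → ℤ} {h : ℕ} {f : ℤ} (hA : IsBhSet h (Set.range a))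
    (hbad : ¬ IsBhSet h (Set.range a ∪ {f})) : ∃ r X Y, IsCollision a h f r X Y := by
  obtain ⟨r, X, Y, hr, hXA, hYA, hXY, hcard, hY, hsum⟩ :=
    hA.exists_disjoint_of_not_isBhSet_union (Set.mem_range_self 0) hbad
  obtain ⟨X, rfl⟩ := Multiset.exists_map_eq_of_forall_mem_range hXA
  obtain ⟨Y, rfl⟩ := Multiset.exists_map_eq_of_forall_mem_range hYA
  rw [Multiset.card_map, Multiset.card_map] at hcard
  rw [Multiset.card_map] at hY
  refine ⟨r, X + .replicate (h - Multiset.card Y) 0, Y + .replicate (h - Multiset.card Y) 0,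
    ⟨hr, by simp; omega, by simp; omega, fun i hiX hiY => ?_, ?_⟩⟩
  · rcases Multiset.mem_add.mp hiX with hiX | hiX
    · rcases Multiset.mem_add.mp hiY with hiY | hiY
      · exact absurd rfl (Multiset.disjoint_map_map.mp hXY i hiX i hiY)
      · exact Multiset.eq_of_mem_replicate hiY
    · exact Multiset.eq_of_mem_replicate hiX
  · simp only [Multiset.map_add, Multiset.sum_add, Multiset.map_replicate, Multiset.sum_replicate]
    linarith

end Collisions

theorem stmt_1_general (h k : ℕ)
    (a : Fin (k + 1) → ℤ) (ha : StrictMono a)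
    (hA : IsBhSet h (Set.range a)) :
    {f : ℤ | a (Fin.last k) < f ∧ ¬ IsBhSet h (Set.range a ∪ {f})}.Finite ∧
    {f : ℤ | a (Fin.last k) < f ∧ ¬ IsBhSet h (Set.range a ∪ {f})}.ncard ≤
      ∑ r ∈ Finset.Icc 1 (h - 1), ∑ M ∈ Finset.Icc 1 k,
        k.choose M * (k - M + h - r).choose (h - r) * (h.choose M - r.choose M) := by
  set B := {f : ℤ | a (Fin.last k) < f ∧ ¬ IsBhSet h (Set.range a ∪ {f})}
  have hcol : ∀ f ∈ B, ∃ r X Y, IsCollision a h f r X Y := fun f hf => exists_isCollision hA hf.2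
  choose! r X Y hw using hcol
  set code := fun f => collisionCode (r f) (X f) (Y f)
  have hmaps : ∀ f ∈ B, code f ∈ witnessCodes h k := fun f hf =>
    (hw f hf).collisionCode_mem ha.monotone hf.1
  have hinj : Set.InjOn code B := fun f hf f' hf' hcode =>
    (hw f hf).eq_of_collisionCode_eq (hw f' hf') hcode
  have hfin : B.Finite := Set.Finite.of_finite_image
    ((witnessCodes h k).finite_toSet.subset (Set.image_subset_iff.mpr hmaps)) hinj
  refine ⟨hfin, ?_⟩
  calc B.ncard ≤ (witnessCodes h k : Set _).ncard :=
        Set.ncard_le_ncard_of_injOn code hmaps hinj (witnessCodes h k).finite_toSet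
    _ = _ := by rw [Set.ncard_coe_finset, card_witnessCodes]

theorem stmt_1 (h k : ℕ) (hh : 1 ≤ h)
    (a : Fin (k + 1) → ℤ) (ha : StrictMono a)
    (hA : IsBhSet h (Set.range a)) :
    {f : ℤ | a (Fin.last k) < f ∧ ¬ IsBhSet h (Set.range a ∪ {f})}.Finite ∧
    {f : ℤ | a (Fin.last k) < f ∧ ¬ IsBhSet h (Set.range a ∪ {f})}.ncard ≤
      ∑ r ∈ Finset.Icc 1 (h - 1), ∑ M ∈ Finset.Icc 1 k,
        k.choose M * (k - M + h - r).choose (h - r) * (h.choose M - r.choose M) :=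
  stmt_1_general h k a ha hA
end

section
/- Define real numbers α_k for k ≥ 7 by α_7 = 0.269877 and α_{k+1} = α_k/2 + (1/(2^k·k!))·Σ_{j=0}^{k−1} binom(k−1, j)·binom(k, j)·2^j. Then for every k ≥ 7 one has α_{k+1} ≤ α_k/2 + 4^k/(2k·k!), and consequently for every ε with 0 < ε < 2, the sequence (2 − ε)^k·α_k tends to 0 as k → ∞. -/
/-- Auxiliary sequence: `alphaAux n = α_{n+7}`, where `α_7 = 0.269877` and
`α_{k+1} = α_k/2 + (1/(2^k·k!))·Σ_{j=0}^{k−1} C(k−1,j)·C(k,j)·2^j`. -/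
noncomputable def alphaAux : ℕ → ℝ
  | 0 => 0.269877
  | (n + 1) => alphaAux n / 2 +
      (1 / ((2 : ℝ) ^ (n + 7) * Nat.factorial (n + 7))) *
        ∑ j ∈ Finset.range (n + 7),
          ((n + 6).choose j : ℝ) * ((n + 7).choose j : ℝ) * (2 : ℝ) ^ j

/-- `alpha k = α_k` for `k ≥ 7`. -/
noncomputable def alpha (k : ℕ) : ℝ := alphaAux (k - 7)

/-!
Bounding `C(k-1,j)·2^j ≤ 3^(k-1)` (one term of the expansion of `(2+1)^(k-1)`) and
`Σ_j C(k,j) ≤ 2^k` shows that the inhomogeneous term of the recursion is at most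
`3^(k-1)/k! ≤ 4^k/(2k·k!)`. Hence `β_k = 2^k α_k` satisfies `β_{k+1} ≤ β_k + 8^k/k!`, so `β_k`
stays below `β_7 + exp 8`, and `(2-ε)^k α_k = ((2-ε)/2)^k β_k` decays geometrically.
-/

open Finset Filter

def binomSum (k : ℕ) : ℕ := ∑ j ∈ range k, (k - 1).choose j * k.choose j * 2 ^ j

theorem Nat.choose_mul_two_pow_le_three_pow (n j : ℕ) : n.choose j * 2 ^ j ≤ 3 ^ n := by
  rcases lt_or_ge n j with hnj | hjn
  · simp [Nat.choose_eq_zero_of_lt hnj]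
  have hexp : 3 ^ n = ∑ m ∈ range (n + 1), 2 ^ m * n.choose m := by
    simpa [mul_comm] using add_pow (2 : ℕ) 1 n
  rw [hexp, mul_comm]
  exact single_le_sum (f := fun m => 2 ^ m * n.choose m) (fun _ _ => Nat.zero_le _)
    (mem_range.2 (Nat.lt_succ_of_le hjn))

theorem binomSum_le (k : ℕ) : binomSum k ≤ 3 ^ (k - 1) * 2 ^ k := by
  calc binomSum k ≤ ∑ j ∈ range k, 3 ^ (k - 1) * k.choose j := by
        refine sum_le_sum fun j _ => ?_
        have := Nat.choose_mul_two_pow_le_three_pow (k - 1) j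
        calc (k - 1).choose j * k.choose j * 2 ^ j
            = (k - 1).choose j * 2 ^ j * k.choose j := by ring
          _ ≤ 3 ^ (k - 1) * k.choose j := by gcongr
    _ = 3 ^ (k - 1) * ∑ j ∈ range k, k.choose j := by rw [mul_sum]
    _ ≤ 3 ^ (k - 1) * ∑ j ∈ range (k + 1), k.choose j := by
        exact Nat.mul_le_mul_left _ (sum_le_sum_of_subset (range_subset_range.2 k.le_succ))
    _ = 3 ^ (k - 1) * 2 ^ k := by rw [Nat.sum_range_choose]

theorem two_mul_succ_mul_three_pow_le_four_pow (n : ℕ) : 2 * (n + 1) * 3 ^ n ≤ 4 ^ (n + 1) := by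
  rcases lt_or_ge n 2 with hn | hn
  · interval_cases n <;> norm_num
  induction n, hn using Nat.le_induction with
  | base => norm_num
  | succ n hn ih =>
    -- `2·3^(n+1) ≤ 2(n+1)·3^n` once `n ≥ 2`, so both parts of the new term are controlled by `ih`
    have h3 : 3 * 3 ^ n ≤ (n + 1) * 3 ^ n := by gcongr; omega
    rw [pow_succ 3, pow_succ 4]
    nlinarith

theorem two_mul_mul_binomSum_le (k : ℕ) : 2 * k * binomSum k ≤ 8 ^ k := by
  rcases k with _ | n
  · simp
  calc 2 * (n + 1) * binomSum (n + 1) ≤ 2 * (n + 1) * (3 ^ n * 2 ^ (n + 1)) := by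
        gcongr; simpa using binomSum_le (n + 1)
    _ = 2 * (n + 1) * 3 ^ n * 2 ^ (n + 1) := by ring
    _ ≤ 4 ^ (n + 1) * 2 ^ (n + 1) := by gcongr; exact two_mul_succ_mul_three_pow_le_four_pow n
    _ = 8 ^ (n + 1) := by rw [← mul_pow]; norm_num

theorem alphaAux_nonneg (n : ℕ) : 0 ≤ alphaAux n := by
  induction n with
  | zero => norm_num [alphaAux]
  | succ n ih =>
    rw [alphaAux]
    have := sum_nonneg fun j (_ : j ∈ range (n + 7)) =>
      (by positivity : (0 : ℝ) ≤ ((n + 6).choose j : ℝ) * ((n + 7).choose j : ℝ) * 2 ^ j)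
    positivity

theorem alpha_nonneg (k : ℕ) : 0 ≤ alpha k := alphaAux_nonneg _

theorem alpha_succ {k : ℕ} (hk : 7 ≤ k) :
    alpha (k + 1) = alpha k / 2 + binomSum k / (2 ^ k * k.factorial) := by
  obtain ⟨n, rfl⟩ := Nat.exists_eq_add_of_le' hk
  simp only [alpha, binomSum, Nat.add_sub_cancel, show n + 7 + 1 - 7 = n + 1 by omega, alphaAux,
    show n + 7 - 1 = n + 6 by omega]
  push_cast
  ring

theorem alpha_succ_le {k : ℕ} (hk : 7 ≤ k) :
    alpha (k + 1) ≤ alpha k / 2 + (4 : ℝ) ^ k / (2 * k * k.factorial) := by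
  rw [alpha_succ hk]
  gcongr alpha k / 2 + ?_
  have hk0 : (0 : ℝ) < k := by exact_mod_cast (show 0 < k by omega)
  have hS : (2 * k * binomSum k : ℝ) ≤ 4 ^ k * 2 ^ k := by
    rw [← mul_pow, show (4 : ℝ) * 2 = 8 by norm_num]
    exact_mod_cast two_mul_mul_binomSum_le k
  rw [div_le_div_iff₀ (by positivity) (by positivity)]
  nlinarith [(by positivity : (0 : ℝ) < k.factorial)]

theorem two_pow_mul_alpha_succ_le {k : ℕ} (hk : 7 ≤ k) :
    2 ^ (k + 1) * alpha (k + 1) ≤ 2 ^ k * alpha k + 8 ^ k / k.factorial := by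
  have hk1 : (1 : ℝ) ≤ k := by exact_mod_cast (show 1 ≤ k by omega)
  calc 2 ^ (k + 1) * alpha (k + 1) ≤ 2 ^ (k + 1) * (alpha k / 2 + 4 ^ k / (2 * k.factorial)) := by
        gcongr
        exact (alpha_succ_le hk).trans (by gcongr; linarith)
    _ = 2 ^ k * alpha k + 8 ^ k / k.factorial := by
        rw [show (8 : ℝ) = 4 * 2 by norm_num, mul_pow]; field_simp; ring

theorem two_pow_mul_alpha_le {k : ℕ} (hk : 7 ≤ k) :
    2 ^ k * alpha k ≤ 2 ^ 7 * alpha 7 + Real.exp 8 := by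
  suffices h : 2 ^ k * alpha k ≤ 2 ^ 7 * alpha 7 + ∑ j ∈ range k, (8 : ℝ) ^ j / j.factorial from
    h.trans (by gcongr; exact Real.sum_le_exp_of_nonneg (by norm_num) k)
  induction k, hk using Nat.le_induction with
  | base => simpa using sum_nonneg fun j _ => by positivity
  | succ k hk ih =>
    rw [sum_range_succ]
    linarith [two_pow_mul_alpha_succ_le hk]

theorem stmt_19 :
    (∀ k : ℕ, 7 ≤ k →
      alpha (k + 1) ≤ alpha k / 2 + (4 : ℝ) ^ k / (2 * k * Nat.factorial k)) ∧
    (∀ ε : ℝ, 0 < ε → ε < 2 →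
      Filter.Tendsto (fun k : ℕ => (2 - ε) ^ k * alpha k) Filter.atTop (nhds 0)) := by
  refine ⟨fun k hk => alpha_succ_le hk, fun ε hε0 hε2 => ?_⟩
  set C := 2 ^ 7 * alpha 7 + Real.exp 8
  have hr0 : 0 ≤ (2 - ε) / 2 := by linarith
  have hr1 : (2 - ε) / 2 < 1 := by linarith
  refine squeeze_zero' (Eventually.of_forall fun k => mul_nonneg (by positivity) (alpha_nonneg k))
    ?_ (by simpa using (tendsto_pow_atTop_nhds_zero_of_lt_one hr0 hr1).mul_const C)
  filter_upwards [eventually_ge_atTop 7] with k hk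
  calc (2 - ε) ^ k * alpha k = ((2 - ε) / 2) ^ k * (2 ^ k * alpha k) := by
        rw [div_pow]; field_simp
    _ ≤ ((2 - ε) / 2) ^ k * C := by gcongr; exact two_pow_mul_alpha_le hk
end
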